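/- Let N be a 1-nested hybridization network, let h be a hybrid node whose cluster is the singleton {i}, and let K be its reticulation cycle with split node u. Then the leaf i is a strict descendant of u: every path from the root to i contains u. -/

import Mathlib

/-- A walk in a directed graph `E` given by its (nonempty) list of vertices,
from `u` to `v`. -/
def IsWalk {V : Type*} (E : V → V → Prop) (l : List V) (u v : V) : Prop :=
  l.Chain' E ∧ l.head? = some u ∧ l.getLast? = some v

/-- In-degree of a node. -/
noncomputable def inDeg {V : Type*} [Fintype V] (E : V → V → Prop) (v : V) : ℕ :=
  Nat.card {u // E u v}

/-- Out-degree of a node. -/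
noncomputable def outDeg {V : Type*} [Fintype V] (E : V → V → Prop) (v : V) : ℕ :=
  Nat.card {w // E v w}

/-- The cluster of a node: the set of leaves (out-degree 0 nodes) that are
descendants of it. -/
noncomputable def cluster {V : Type*} [Fintype V] (E : V → V → Prop) (v : V) : Set V :=
  {l | outDeg E l = 0 ∧ Relation.ReflTransGen E v l}

/-- The intermediate (internal) nodes of a walk. -/
def internals {V : Type*} (l : List V) : List V := l.tail.dropLast

/-- The arcs of a walk. -/
def arcsOf {V : Type*} (l : List V) : List (V × V) := l.zip l.tail

/-- A reticulation cycle with split node `x` and hybrid end `h`, consisting of the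
two internally disjoint merge paths `p` and `q`. -/
def RetCycleAt {V : Type*} (E : V → V → Prop) (x h : V) (p q : List V) : Prop :=
  IsWalk E p x h ∧ IsWalk E q x h ∧ p ≠ q ∧ ∀ y ∈ internals p, y ∉ internals q

/-- A network is 1-nested when every pair of distinct reticulation cycles (for hybrid
nodes) have disjoint sets of arcs. -/
noncomputable def OneNested {V : Type*} [Fintype V] (E : V → V → Prop) : Prop :=
  ∀ x h p q x' h' p' q', 2 ≤ inDeg E h → 2 ≤ inDeg E h' →
    RetCycleAt E x h p q → RetCycleAt E x' h' p' q' →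
    ¬ (x = x' ∧ h = h' ∧ ({p, q} : Set (List V)) = {p', q'}) →
    ∀ a ∈ arcsOf p ++ arcsOf q, a ∉ arcsOf p' ++ arcsOf q'

/-!
Say that `u` dominates `v` if every walk from the root to `v` passes through `u`. As distinct
reticulation cycles share no arc, every internal vertex of a merge path has its predecessor on the
path as its only parent: a second parent would close a reticulation cycle through that arc. Hence
`u` dominates every vertex of the cycle other than `h`, and then `h` itself, whose (at most two)
parents are the last vertices before `h` on the two merge paths.

Now let a walk from the root to a descendant of `h` avoid `u`, and let `w` be its first vertex
below `h`. If `w ≠ h`, this walk and a walk running through `u`, down a merge path to `h` and on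
to `w` enter `w` through different parents, so they close a reticulation cycle at `w`. Its split
lies on the first walk, hence neither below `h` nor on the cycle of `h`; so it lies above `u`, and
the new cycle contains a whole merge path, contradicting 1-nestedness.
-/

open Relation

namespace List

variable {α : Type*}

theorem exists_split_first {P : α → Prop} {l : List α} (h : ∃ x ∈ l, P x) :
    ∃ l₁ x l₂, l = l₁ ++ x :: l₂ ∧ P x ∧ ∀ y ∈ l₁, ¬ P y := by
  classical
  obtain ⟨x, hx, hPx⟩ := h
  obtain ⟨y, l₁, l₂, h₁, hy, hl, -⟩ :=
    exists_of_eraseP (p := fun y => decide (P y)) hx (by simpa using hPx)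
  exact ⟨l₁, y, l₂, hl, by simpa using hy, by simpa using h₁⟩

theorem exists_split_last {P : α → Prop} {l : List α} (h : ∃ x ∈ l, P x) :
    ∃ l₁ x l₂, l = l₁ ++ x :: l₂ ∧ P x ∧ ∀ y ∈ l₂, ¬ P y := by
  obtain ⟨l₁, x, l₂, hl, hx, h₁⟩ :=
    exists_split_first (l := l.reverse) (by simpa using h)
  refine ⟨l₂.reverse, x, l₁.reverse, ?_, hx, by simpa using h₁⟩
  rw [← reverse_reverse l, hl]
  simp

theorem suffix_of_cons_suffix_append {l l₁ l₂ : List α} {x : α} (h : x :: l <:+ l₁ ++ l₂)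
    (hx : x ∉ l₂) : l₂ <:+ x :: l :=
  (suffix_or_suffix_of_suffix h (suffix_append l₁ l₂)).resolve_left
    fun h' => hx (h'.subset mem_cons_self)

end List

section Walk

variable {V : Type*} {E : V → V → Prop} {l l₁ l₂ m : List V} {a b c x : V}

theorem isWalk_iff :
    IsWalk E l a b ↔ l.IsChain E ∧ l.head? = some a ∧ l.getLast? = some b := Iff.rfl

theorem exists_isWalk (h : ReflTransGen E a b) : ∃ l, IsWalk E l a b := by
  obtain ⟨l, hc, hl⟩ := List.exists_isChain_cons_of_relationReflTransGen h
  exact ⟨a :: l, hc, rfl, by simp [List.getLast?_eq_some_getLast, hl]⟩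

namespace IsWalk

theorem eq_cons (hw : IsWalk E l a b) : l = a :: l.tail := by
  obtain ⟨l', rfl⟩ := List.head?_eq_some_iff.mp hw.2.1
  rfl

theorem start_mem (hw : IsWalk E l a b) : a ∈ l := by
  rw [hw.eq_cons]
  exact List.mem_cons_self

theorem eq_dropLast_append (hw : IsWalk E l a b) : l = l.dropLast ++ [b] := by
  obtain ⟨l', rfl⟩ := List.getLast?_eq_some_iff.mp hw.2.2
  simp

theorem end_mem (hw : IsWalk E l a b) : b ∈ l := by
  rw [hw.eq_dropLast_append]
  exact List.mem_concat_self

theorem concat (hw : IsWalk E l a b) (hbc : E b c) : IsWalk E (l ++ [c]) a c := by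
  refine ⟨List.IsChain.append hw.1 (List.isChain_singleton c) ?_, by simp [hw.2.1], by simp⟩
  simp [hw.2.2, hbc]

theorem dropLast_append (hl : IsWalk E l a b) (hm : IsWalk E m b c) :
    IsWalk E (l.dropLast ++ m) a c := by
  obtain ⟨l', rfl⟩ := List.getLast?_eq_some_iff.mp hl.2.2
  obtain ⟨m', rfl⟩ := List.head?_eq_some_iff.mp hm.2.1
  rw [List.dropLast_concat, isWalk_iff] at *
  refine ⟨by simpa using List.IsChain.append_overlap (l₂ := [b]) hl.1 hm.1 (by simp), ?_, ?_⟩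
  · cases l' <;> simp_all
  · simpa using hm.2.2

theorem takeUntil (hw : IsWalk E (l₁ ++ x :: l₂) a b) : IsWalk E (l₁ ++ [x]) a x := by
  refine ⟨List.IsChain.prefix hw.1 ?_, ?_, by simp⟩
  · simp
  · cases l₁ <;> simpa using hw.2.1

theorem dropUntil (hw : IsWalk E (l₁ ++ x :: l₂) a b) : IsWalk E (x :: l₂) x b :=
  ⟨List.IsChain.suffix hw.1 (List.suffix_append _ _), rfl, by simpa using hw.2.2⟩

theorem reflTransGen (hw : IsWalk E l a b) : ReflTransGen E a b := by
  obtain ⟨l', rfl⟩ := List.head?_eq_some_iff.mp hw.2.1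
  have hb : (a :: l').getLast (List.cons_ne_nil _ _) = b := by
    simpa [List.getLast?_eq_some_getLast] using hw.2.2
  simpa [hb] using List.relationReflTransGen_of_exists_isChain _ hw.1 (List.cons_ne_nil _ _)

theorem reflTransGen_of_mem (hw : IsWalk E l a b) (hx : x ∈ l) : ReflTransGen E a x := by
  obtain ⟨s, t, rfl⟩ := List.append_of_mem hx
  exact hw.takeUntil.reflTransGen

theorem transGen_of_mem_dropLast (hw : IsWalk E l a b) (hx : x ∈ l.dropLast) :
    TransGen E x b := by
  obtain ⟨s, t, hst⟩ := List.append_of_mem hx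
  rw [hw.eq_dropLast_append, hst, List.append_assoc, List.cons_append] at hw
  have hxb := hw.dropUntil
  cases t with
  | nil => exact .single (List.isChain_pair.mp hxb.1)
  | cons y t =>
    rw [List.cons_append] at hxb
    exact .head' (List.isChain_cons_cons.mp hxb.1).1
      (dropUntil (l₁ := [x]) hxb).reflTransGen

theorem eq_singleton (hacyc : ∀ v, ¬ TransGen E v v) (hw : IsWalk E l a a) : l = [a] := by
  have hl := hw.eq_dropLast_append
  cases hd : l.dropLast with
  | nil => simpa [hd] using hl
  | cons y t =>
    have hy : y = a := by rw [hl, hd] at hw; simpa using hw.2.1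
    exact absurd (hw.transGen_of_mem_dropLast (by simp [hd, hy])) (hacyc a)

theorem exists_eq_append_pair (hw : IsWalk E l a b) (hab : a ≠ b) :
    ∃ l' c, l = l' ++ [c, b] ∧ IsWalk E (l' ++ [c]) a c ∧ E c b := by
  have hl := hw.eq_dropLast_append
  obtain ⟨l', c, hc⟩ : ∃ l' c, l.dropLast = l' ++ [c] := by
    rcases List.eq_nil_or_concat l.dropLast with hd | hd
    · rw [hd] at hl; rw [hl] at hw; exact absurd (by simpa using hw.2.1.symm) hab
    · simpa using hd
  rw [hc, List.append_assoc, List.singleton_append] at hl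
  rw [hl] at hw
  exact ⟨l', c, hl, hw.takeUntil, List.isChain_pair.mp (hw.1.infix List.infix_append_right)⟩

end IsWalk

end Walk

section Dominates

variable {V : Type*} {E : V → V → Prop} {l : List V} {r u v w x : V}

/-- `v` is a strict descendant of `u`. -/
def Dominates (E : V → V → Prop) (r u v : V) : Prop :=
  ∀ l, IsWalk E l r v → u ∈ l

theorem Dominates.refl : Dominates E r u u := fun l hl => by
  rw [hl.eq_dropLast_append]
  simp

theorem Dominates.mem_of_mem (hd : Dominates E r u x) (hl : IsWalk E l r v) (hx : x ∈ l) :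
    u ∈ l := by
  obtain ⟨s, t, rfl⟩ := List.append_of_mem hx
  have := hd _ hl.takeUntil
  simp only [List.mem_append, List.mem_cons] at this ⊢
  tauto

theorem Dominates.trans (huv : Dominates E r u v) (hvw : Dominates E r v w) :
    Dominates E r u w := fun l hl => huv.mem_of_mem hl (hvw l hl)

theorem dominates_of_forall_parent (hvr : v ≠ r) (h : ∀ z, E z v → Dominates E r u z) :
    Dominates E r u v := by
  intro l hl
  obtain ⟨l', z, rfl, hz, hzv⟩ := hl.exists_eq_append_pair hvr.symm
  have := h z hzv _ hz
  simp only [List.mem_append, List.mem_cons] at this ⊢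
  tauto

theorem dominates_of_isWalk (hr : ∀ z, ¬ E z r) (hw : IsWalk E l u w)
    (huniq : ∀ x y, [x, y] <:+: l.dropLast → ∀ z, E z y → z = x) :
    ∀ y ∈ l.dropLast, Dominates E r u y := by
  induction l generalizing u with
  | nil => simp
  | cons a l ih =>
    obtain rfl : a = u := by simpa using hw.2.1
    cases l with
    | nil => simp
    | cons v l =>
      have hdrop : (a :: v :: l).dropLast = a :: (v :: l).dropLast :=
        List.dropLast_cons_of_ne_nil (List.cons_ne_nil _ _)
      rw [hdrop] at huniq
      intro y hy
      rw [hdrop, List.mem_cons] at hy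
      rcases hy with rfl | hy
      · exact .refl
      obtain ⟨t, ht⟩ : ∃ t, (v :: l).dropLast = v :: t := by
        cases l with
        | nil => simp at hy
        | cons => exact ⟨_, rfl⟩
      have huv : Dominates E r a v := by
        have huv : E a v := (List.isChain_cons_cons.mp hw.1).1
        refine dominates_of_forall_parent (fun hvr => hr a (hvr ▸ huv)) fun z hz => ?_
        rw [huniq a v (by rw [ht]; exact ⟨[], t, rfl⟩) z hz]
        exact .refl
      exact huv.trans
        (ih (hw.dropUntil (l₁ := [a])) (fun x y hxy => huniq x y (List.infix_cons hxy)) y hy)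

end Dominates

section Arcs

variable {V : Type*} {E : V → V → Prop} {l : List V} {a b w x y z : V}

theorem mem_arcsOf_of_infix (h : [x, y] <:+: l) : (x, y) ∈ arcsOf l := by
  obtain ⟨s, t, rfl⟩ := h
  induction s with
  | nil => simp [arcsOf]
  | cons a s ih =>
    rw [List.cons_append, List.cons_append]
    generalize s ++ [x, y] ++ t = m at ih
    cases m with
    | nil => simp [arcsOf] at ih
    | cons b m => exact List.mem_cons_of_mem _ ih

theorem IsWalk.rel_of_infix (hw : IsWalk E l a b) (h : [x, y] <:+: l) : E x y :=
  List.isChain_pair.mp (List.IsChain.infix hw.1 h)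

theorem IsWalk.mem_internals (hw : IsWalk E l a b) (hx : x ∈ l) (hxa : x ≠ a) (hxb : x ≠ b) :
    x ∈ internals l := by
  obtain ⟨t, rfl⟩ := List.head?_eq_some_iff.mp hw.2.1
  cases t with
  | nil => simp_all
  | cons y t =>
    have ht := (hw.dropUntil (l₁ := [a])).eq_dropLast_append
    rw [ht] at hx ⊢
    simpa [internals, hxa, hxb] using hx

variable [Fintype V]

theorem two_le_inDeg (hab : a ≠ b) (ha : E a w) (hb : E b w) : 2 ≤ inDeg E w := by
  have : Nontrivial {u // E u w} := ⟨⟨a, ha⟩, ⟨b, hb⟩, by simpa using hab⟩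
  exact Finite.one_lt_card

theorem eq_or_eq_of_inDeg_le_two (h2 : inDeg E w ≤ 2) (hab : a ≠ b) (ha : E a w) (hb : E b w)
    (hz : E z w) : z = a ∨ z = b := by
  by_contra! hz'
  have h3 : ({a, b, z} : Set V).ncard = 3 :=
    Set.ncard_eq_three.mpr ⟨a, b, z, hab, hz'.1.symm, hz'.2.symm, rfl⟩
  have hle : ({a, b, z} : Set V).ncard ≤ {u | E u w}.ncard :=
    Set.ncard_le_ncard (by simp [Set.insert_subset_iff, ha, hb, hz])
  have : inDeg E w = {u | E u w}.ncard := rfl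
  omega

end Arcs

section RetCycle

variable {V : Type*} {E : V → V → Prop} {A B p q : List V} {r u h c w x y z : V}

theorem exists_retCycleAt_of_ne_parents (hA : IsWalk E A r c) (hB : IsWalk E B r z) (hc : E c w)
    (hz : E z w) (hcz : c ≠ z) :
    ∃ x a b, x ∈ B ∧ a <:+ A ++ [w] ∧ [c, w] <:+ a ∧ RetCycleAt E x w a b := by
  obtain ⟨B₁, x, B₂, rfl, hxA, hB₂⟩ := List.exists_split_last (P := (· ∈ A))
    (l := B) ⟨r, hB.start_mem, hA.start_mem⟩
  obtain ⟨A₁, A₂, rfl⟩ := List.append_of_mem hxA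
  have hA₂ := hA.dropUntil.eq_dropLast_append
  have hB₂' := hB.dropUntil.eq_dropLast_append
  have hca : [c, w] <:+ x :: (A₂ ++ [w]) := by
    rw [← List.cons_append, hA₂]
    simp
  have hzb : [z, w] <:+ x :: (B₂ ++ [w]) := by
    rw [← List.cons_append, hB₂']
    simp
  have hAw := hA.concat hc
  have hBw := hB.concat hz
  simp only [List.append_assoc, List.cons_append] at hAw hBw
  refine ⟨x, x :: (A₂ ++ [w]), x :: (B₂ ++ [w]), by simp, by simp, hca,
    hAw.dropUntil, hBw.dropUntil, ?_, ?_⟩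
  · intro heq
    rw [← heq] at hzb
    rcases List.suffix_or_suffix_of_suffix hca hzb with h | h <;>
      simpa [hcz, eq_comm] using h.eq_of_length rfl
  · simp only [internals, List.tail_cons, List.dropLast_concat]
    exact fun y hyA hyB => hB₂ y hyB (by simp [hyA])

end RetCycle

theorem not_rel_root {V : Type*} {E : V → V → Prop} {r : V} (hacyc : ∀ v, ¬ TransGen E v v)
    (hroot : ∀ v, ReflTransGen E r v) (z : V) : ¬ E z r :=
  fun hz => hacyc r (.tail' (hroot z) hz)

theorem OneNested.not_mem_arcsOf {V : Type*} [Fintype V] {E : V → V → Prop}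
    {x h x' h' : V} {p q p' q' : List V} {e : V × V} (hn : OneNested E) (hh : 2 ≤ inDeg E h)
    (hh' : 2 ≤ inDeg E h') (hK : RetCycleAt E x h p q) (hK' : RetCycleAt E x' h' p' q')
    (hne : h ≠ h') (he : e ∈ arcsOf p) : e ∉ arcsOf p' := fun he' =>
  hn x h p q x' h' p' q' hh hh' hK hK' (fun H => hne H.2.1) e (List.mem_append_left _ he)
    (List.mem_append_left _ he')

namespace RetCycleAt

variable {V : Type*} {E : V → V → Prop} {p q L : List V} {r u h w x y z : V}

theorem symm (hK : RetCycleAt E u h p q) : RetCycleAt E u h q p :=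
  ⟨hK.2.1, hK.1, hK.2.2.1.symm, fun y hyq hyp => hK.2.2.2 y hyp hyq⟩

theorem ne (hacyc : ∀ v, ¬ TransGen E v v) (hK : RetCycleAt E u h p q) : u ≠ h := by
  rintro rfl
  exact hK.2.2.1 ((hK.1.eq_singleton hacyc).trans (hK.2.1.eq_singleton hacyc).symm)

theorem exists_parents (hacyc : ∀ v, ¬ TransGen E v v) (hK : RetCycleAt E u h p q) :
    ∃ a b, a ≠ b ∧ [a, h] <:+ p ∧ [b, h] <:+ q := by
  obtain ⟨p', a, rfl, hpa, hah⟩ := hK.1.exists_eq_append_pair (hK.ne hacyc)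
  obtain ⟨q', b, rfl, hqb, hbh⟩ := hK.2.1.exists_eq_append_pair (hK.ne hacyc)
  refine ⟨a, b, ?_, List.suffix_append _ _, List.suffix_append _ _⟩
  rintro rfl
  by_cases hau : a = u
  · subst hau
    have hp' : p' = [] := by simpa using hpa.eq_singleton hacyc
    have hq' : q' = [] := by simpa using hqb.eq_singleton hacyc
    exact hK.2.2.1 (by simp [hp', hq'])
  · have hah' : a ≠ h := by rintro rfl; exact hacyc a (.single hah)
    exact hK.2.2.2 a (hK.1.mem_internals (by simp) hau hah')
      (hK.2.1.mem_internals (by simp) hau hah')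

variable [Fintype V]

theorem parent_eq_of_infix_dropLast (hacyc : ∀ v, ¬ TransGen E v v)
    (hroot : ∀ v, ReflTransGen E r v) (hnested : OneNested E) (hhyb : 2 ≤ inDeg E h)
    (hK : RetCycleAt E u h p q) (hxy : [x, y] <:+: p.dropLast) (hz : E z y) : z = x := by
  -- A second parent `z` of `y` closes a reticulation cycle at `y` through the arc `(x, y)`.
  by_contra hzx
  obtain ⟨s, t, hst⟩ := hxy
  have hp : p = s ++ x :: (y :: (t ++ [h])) := by rw [hK.1.eq_dropLast_append, ← hst]; simp
  have hxyp : [x, y] <:+: p := hp ▸ ⟨s, t ++ [h], by simp⟩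
  have hpw := hK.1
  rw [hp] at hpw
  obtain ⟨R, hR⟩ := exists_isWalk (hroot u)
  obtain ⟨B, hB⟩ := exists_isWalk (hroot z)
  have hxy := hK.1.rel_of_infix hxyp
  obtain ⟨_, a, b, -, -, hxya, hK'⟩ :=
    exists_retCycleAt_of_ne_parents (hR.dropLast_append hpw.takeUntil) hB hxy hz (Ne.symm hzx)
  have hyh : y ≠ h := by
    rintro rfl
    exact hacyc y (hK.1.transGen_of_mem_dropLast (by simp [← hst]))
  exact hnested.not_mem_arcsOf hhyb (two_le_inDeg (Ne.symm hzx) hxy hz) hK hK' hyh.symm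
    (mem_arcsOf_of_infix hxyp) (mem_arcsOf_of_infix hxya.isInfix)

theorem dominates_of_mem_dropLast (hacyc : ∀ v, ¬ TransGen E v v)
    (hroot : ∀ v, ReflTransGen E r v) (hnested : OneNested E) (hhyb : 2 ≤ inDeg E h)
    (hK : RetCycleAt E u h p q) : ∀ y ∈ p.dropLast, Dominates E r u y :=
  dominates_of_isWalk (not_rel_root hacyc hroot) hK.1 fun _ _ hxy _ hz =>
    hK.parent_eq_of_infix_dropLast hacyc hroot hnested hhyb hxy hz

theorem dominates_hybrid (hacyc : ∀ v, ¬ TransGen E v v)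
    (hroot : ∀ v, ReflTransGen E r v) (hnested : OneNested E) (hhyb : 2 ≤ inDeg E h)
    (hin2 : inDeg E h ≤ 2) (hK : RetCycleAt E u h p q) : Dominates E r u h := by
  obtain ⟨a, b, hab, ⟨p', rfl⟩, ⟨q', rfl⟩⟩ := hK.exists_parents hacyc
  have hah : E a h := hK.1.rel_of_infix List.infix_append_right
  have hbh : E b h := hK.2.1.rel_of_infix List.infix_append_right
  refine dominates_of_forall_parent (fun hr => not_rel_root hacyc hroot a (hr ▸ hah))
    fun z hz => ?_
  rcases eq_or_eq_of_inDeg_le_two hin2 hab hah hbh hz with rfl | rfl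
  · exact hK.dominates_of_mem_dropLast hacyc hroot hnested hhyb z (by simp)
  · exact hK.symm.dominates_of_mem_dropLast hacyc hroot hnested hhyb z (by simp)


theorem mem_of_enters_descendants (hacyc : ∀ v, ¬ TransGen E v v)
    (hroot : ∀ v, ReflTransGen E r v) (hnested : OneNested E) (hhyb : 2 ≤ inDeg E h)
    (hin2 : inDeg E h ≤ 2) (hK : RetCycleAt E u h p q) (hL : IsWalk E L r z)
    (hLh : ∀ y ∈ L, ¬ ReflTransGen E h y) (hzw : E z w) (hw : ReflTransGen E h w) :
    u ∈ L := by
  by_cases hwh : w = h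
  · subst hwh
    simpa [hK.ne hacyc] using hK.dominates_hybrid hacyc hroot hnested hhyb hin2 _ (hL.concat hzw)
  obtain ⟨H, hH⟩ := exists_isWalk hw
  obtain ⟨H', c, -, hHc, hcw⟩ := hH.exists_eq_append_pair (Ne.symm hwh)
  obtain ⟨R, hR⟩ := exists_isWalk (hroot u)
  have hcz : c ≠ z := fun hcz => hLh z hL.end_mem (hcz ▸ hHc.reflTransGen)
  obtain ⟨x, a, b, hxL, ha, -, hK'⟩ :=
    exists_retCycleAt_of_ne_parents (hR.dropLast_append (hK.1.dropLast_append hHc)) hL hcw hzw hcz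
  by_cases hxp : x ∈ p.dropLast
  · exact (hK.dominates_of_mem_dropLast hacyc hroot hnested hhyb x hxp).mem_of_mem hL hxL
  -- Otherwise the split lies above `u`, so the new cycle at `w` runs through all of `p`.
  exfalso
  obtain ⟨a', rfl⟩ := List.head?_eq_some_iff.mp hK'.1.2.1
  have hxH : x ∉ H' ++ [c] := fun hx => hLh x hxL (hHc.reflTransGen_of_mem hx)
  have hxw : x ≠ w := fun hx => hLh x hxL (hx ▸ hw)
  have hsuf : p.dropLast ++ (H' ++ [c]) ++ [w] <:+ x :: a' :=
    List.suffix_of_cons_suffix_append (l₁ := R.dropLast) (by simpa using ha) fun hx => by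
      rcases List.mem_append.mp hx with hx | hx
      · rcases List.mem_append.mp hx with hx | hx
        exacts [hxp hx, hxH hx]
      · exact hxw (List.mem_singleton.mp hx)
  have hpH : p <+: p.dropLast ++ (H' ++ [c]) := by
    rw [hHc.eq_cons, ← List.singleton_append, ← List.append_assoc,
      ← hK.1.eq_dropLast_append]
    exact List.prefix_append _ _
  have hpa : p <:+: x :: a' :=
    hpH.isInfix.trans ((List.prefix_append _ _).isInfix.trans hsuf.isInfix)
  obtain ⟨a₀, -, -, ⟨p', hp'⟩, -⟩ := hK.exists_parents hacyc
  exact hnested.not_mem_arcsOf hhyb (two_le_inDeg hcz hcw hzw) hK hK' (Ne.symm hwh)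
    (mem_arcsOf_of_infix (hp' ▸ List.infix_append_right))
    (mem_arcsOf_of_infix (List.infix_append_right.trans (hp' ▸ hpa)))

theorem dominates_of_reflTransGen (hacyc : ∀ v, ¬ TransGen E v v)
    (hroot : ∀ v, ReflTransGen E r v) (hnested : OneNested E) (hhyb : 2 ≤ inDeg E h)
    (hin2 : inDeg E h ≤ 2) (hK : RetCycleAt E u h p q) (hw : ReflTransGen E h w) :
    Dominates E r u w := by
  intro L hL
  obtain ⟨L₁, w', L₂, rfl, hw', hL₁⟩ :=
    List.exists_split_first (P := ReflTransGen E h) ⟨w, hL.end_mem, hw⟩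
  have hrw' : r ≠ w' := by
    rintro rfl
    obtain ⟨a, -, -, ⟨p', rfl⟩, -⟩ := hK.exists_parents hacyc
    have hah : E a h := hK.1.rel_of_infix List.infix_append_right
    exact hacyc r ((TransGen.tail' (hroot a) hah).trans_left hw')
  obtain ⟨L', z, hL', hL'w, hzw⟩ := hL.takeUntil.exists_eq_append_pair hrw'
  obtain rfl : L₁ = L' ++ [z] := List.append_cancel_right (by simpa using hL')
  exact List.mem_append_left _
    (hK.mem_of_enters_descendants hacyc hroot hnested hhyb hin2 hL'w hL₁ hzw hw')

end RetCycleAt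

theorem stmt11_general {V : Type*} [Fintype V] (E : V → V → Prop) (r : V)
    (hacyc : ∀ v, ¬ Relation.TransGen E v v)
    (hroot : ∀ v, Relation.ReflTransGen E r v)
    (hin2 : ∀ v, inDeg E v ≤ 2)
    (hnested : OneNested E)
    (u h i : V) (p q : List V)
    (hhyb : 2 ≤ inDeg E h)
    (hK : RetCycleAt E u h p q)
    (hcl : cluster E h = {i}) :
    ∀ l : List V, IsWalk E l r i → u ∈ l := by
  have hi : i ∈ cluster E h := hcl ▸ rfl
  exact hK.dominates_of_reflTransGen hacyc hroot hnested hhyb (hin2 h) hi.2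

/-- In a 1-nested hybridization network, if `h` is a hybrid node with cluster
`{i}` and reticulation cycle with split node `u`, then the leaf `i` is a strict
descendant of `u`. -/
theorem stmt11 {V : Type*} [Fintype V] (E : V → V → Prop) (r : V)
    (hacyc : ∀ v, ¬ Relation.TransGen E v v)
    (hroot : ∀ v, Relation.ReflTransGen E r v)
    (hin2 : ∀ v, inDeg E v ≤ 2)
    (hnod1 : ∀ v, inDeg E v ≤ 1 → outDeg E v ≠ 1)
    (hnested : OneNested E)
    (u h i : V) (p q : List V)
    (hhyb : 2 ≤ inDeg E h)
    (hK : RetCycleAt E u h p q)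
    (hcl : cluster E h = {i}) :
    ∀ l : List V, IsWalk E l r i → u ∈ l :=
  stmt11_general E r hacyc hroot hin2 hnested u h i p q hhyb hK hcl
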